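/- Let m = m+ * m- be a product of r distinct odd primes, where every prime dividing m+ is 1 mod 4 and every prime dividing m- is 3 mod 4, with r(m+) >= 1 and r(m-) >= 1. Suppose rationals (v_d) are indexed by divisors d of m, v is an additive-in-disjoint-products valuation data with: ord_2(v_d) = r(d) - 1 whenever m- divides d and 1 < d < m, ord_2(v_d) > r(d) - 1 whenever m- does not divide d and 1 < d < m, and each v_d is multiplied by a factor of 2-adic valuation r(m/d) when d ranges over proper divisors (since ord_2(a_q - 2chi(q)) = 1 for each prime q | (m/d) in the relevant set S). Then the number of proper divisors d with 1 < d < m, m- | d, and 2 | r(d^-) equals 2^{r(m+)} - 1, and the 2-adic valuation of the sum Sum_{1 < d < m, m- | d} 2^{r(m/d)} v_d * (odd unit) equals r(m) - 1. -/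

import Mathlib

/-- The `2`-adic valuation on `ℚ`, with `ord2 0 = ⊤`. -/
noncomputable def ord2 (x : ℚ) : WithTop ℤ :=
  if x = 0 then ⊤ else (padicValRat 2 x : WithTop ℤ)

/-!
A divisor `d` of `m = m⁺ m⁻` with `m⁻ ∣ d` is `e m⁻` for a divisor `e` of `m⁺`, so there are
`2^{r(m⁺)} - 1` such `d < m`, an odd number. Since `m` is squarefree, `r(d) + r(m/d) = r(m)`, so
every summand `2^{r(m/d)} v_d u_d` has `2`-adic valuation exactly `r(m) - 1`. Two rationals of
the same `2`-adic valuation `c` have a sum of valuation `> c`, since their quotient has odd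
numerator and denominator; hence a sum of an odd number of terms of valuation `c` has
valuation `c`.
-/

open Finset

lemma ord2_eq_coe_iff {x : ℚ} {c : ℤ} : ord2 x = c ↔ x ≠ 0 ∧ padicValRat 2 x = c := by
  unfold ord2
  split_ifs with hx <;> simp [hx]

lemma ord2_of_ne_zero {x : ℚ} (hx : x ≠ 0) : ord2 x = padicValRat 2 x := if_neg hx

lemma ord2_mul (x y : ℚ) : ord2 (x * y) = ord2 x + ord2 y := by
  rcases eq_or_ne x 0 with rfl | hx
  · simp [ord2]
  rcases eq_or_ne y 0 with rfl | hy
  · simp [ord2]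
  rw [ord2_of_ne_zero hx, ord2_of_ne_zero hy, ord2_of_ne_zero (mul_ne_zero hx hy),
    padicValRat.mul hx hy, WithTop.coe_add]

lemma ord2_two_pow (n : ℕ) : ord2 ((2 : ℚ) ^ n) = (n : ℤ) := by
  rw [ord2_of_ne_zero (by positivity), padicValRat.pow, show (2 : ℚ) = (2 : ℕ) by norm_num,
    padicValRat.self one_lt_two, mul_one]

lemma ord2_add_of_lt {x y : ℚ} {c : ℤ} (hx : ord2 x = c) (hy : (c : WithTop ℤ) < ord2 y) :
    ord2 (x + y) = c := by
  obtain ⟨hx0, hvx⟩ := ord2_eq_coe_iff.mp hx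
  rcases eq_or_ne y 0 with rfl | hy0
  · simpa using hx
  rw [ord2_of_ne_zero hy0, WithTop.coe_lt_coe, ← hvx] at hy
  have hxy : x + y ≠ 0 := fun h => by
    rw [eq_neg_of_add_eq_zero_right h, padicValRat.neg] at hy
    exact hy.false
  rw [ord2_of_ne_zero hxy, padicValRat.add_eq_of_lt hxy hx0 hy0 hy, hvx]

lemma not_two_dvd_num_den_of_padicValRat_eq_zero {w : ℚ} (hw : w ≠ 0)
    (h : padicValRat 2 w = 0) : ¬ (2 : ℤ) ∣ w.num ∧ ¬ 2 ∣ w.den := by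
  have hnum0 : w.num ≠ 0 := Rat.num_ne_zero.mpr hw
  rw [padicValRat_def] at h
  have hden : ¬ 2 ∣ w.den := fun h2 => by
    have hnum : ¬ (2 : ℤ) ∣ w.num := fun h2' =>
      Nat.not_coprime_of_dvd_of_dvd one_lt_two (Int.natCast_dvd.mp h2') h2 w.reduced
    have := one_le_padicValNat_of_dvd w.den_nz h2
    rw [padicValInt.eq_zero_of_not_dvd hnum] at h
    omega
  refine ⟨fun h2 => ?_, hden⟩
  have := ((padicValInt_dvd_iff (p := 2) 1 w.num).mp
    (by rw [pow_one]; exact_mod_cast h2)).resolve_left hnum0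
  rw [padicValNat.eq_zero_of_not_dvd hden, Nat.cast_zero, sub_zero, Nat.cast_eq_zero] at h
  omega

lemma one_le_padicValRat_two_add_one {w : ℚ} (hw : w ≠ 0) (h : padicValRat 2 w = 0)
    (hw1 : w + 1 ≠ 0) : 1 ≤ padicValRat 2 (w + 1) := by
  obtain ⟨hnum, hden⟩ := not_two_dvd_num_den_of_padicValRat_eq_zero hw h
  have hden' : ¬ (2 : ℤ) ∣ (w.den : ℤ) := by exact_mod_cast hden
  have hden0 : ((w.den : ℤ) : ℚ) ≠ 0 := by exact_mod_cast w.den_nz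
  have hsum : w + 1 = ((w.num + w.den : ℤ) : ℚ) / ((w.den : ℤ) : ℚ) := by
    rw [Int.cast_add, add_div, div_self hden0, Int.cast_natCast, Rat.num_div_den]
  have hsum0 : w.num + (w.den : ℤ) ≠ 0 := fun h0 => hw1 (by rw [hsum, h0]; simp)
  rw [hsum, padicValRat.div (by exact_mod_cast hsum0) hden0, padicValRat.of_int,
    padicValRat.of_int, padicValInt.eq_zero_of_not_dvd hden', Nat.cast_zero, sub_zero]
  exact_mod_cast ((padicValInt_dvd_iff (p := 2) 1 _).mp (by simp; omega)).resolve_left hsum0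

lemma lt_ord2_add {x y : ℚ} {c : ℤ} (hx : ord2 x = c) (hy : ord2 y = c) :
    (c : WithTop ℤ) < ord2 (x + y) := by
  obtain ⟨hx0, hvx⟩ := ord2_eq_coe_iff.mp hx
  obtain ⟨hy0, hvy⟩ := ord2_eq_coe_iff.mp hy
  rcases eq_or_ne (x + y) 0 with hxy | hxy
  · simp [hxy, ord2]
  have hfactor : x + y = y * (x / y + 1) := by field_simp
  have hw1 : x / y + 1 ≠ 0 := right_ne_zero_of_mul (hfactor ▸ hxy)
  have hw : padicValRat 2 (x / y) = 0 := by rw [padicValRat.div hx0 hy0, hvx, hvy, sub_self]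
  have := one_le_padicValRat_two_add_one (div_ne_zero hx0 hy0) hw hw1
  rw [ord2_of_ne_zero hxy, hfactor, padicValRat.mul hy0 hw1, hvy, WithTop.coe_lt_coe]
  omega

lemma ord2_sum_of_forall_eq {ι : Type*} {c : ℤ} (s : Finset ι) (f : ι → ℚ)
    (h : ∀ i ∈ s, ord2 (f i) = c) :
    (Odd #s → ord2 (∑ i ∈ s, f i) = c) ∧
      (Even #s → (c : WithTop ℤ) < ord2 (∑ i ∈ s, f i)) := by
  induction s using Finset.cons_induction with
  | empty => simp [ord2]
  | cons a s ha ih =>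
    obtain ⟨ih_odd, ih_even⟩ := ih fun i hi => h i (mem_cons_of_mem hi)
    have hfa : ord2 (f a) = c := h a (mem_cons_self a s)
    rw [sum_cons, card_cons]
    exact ⟨fun hodd => ord2_add_of_lt hfa (ih_even (Nat.not_odd_iff_even.mp
        (Nat.odd_add_one.mp hodd))),
      fun heven => lt_ord2_add hfa (ih_odd (Nat.not_even_iff_odd.mp
        (Nat.even_add_one.mp heven)))⟩

namespace Nat

lemma Coprime.card_primeFactors_mul {a b : ℕ} (hab : a.Coprime b) :
    #(a * b).primeFactors = #a.primeFactors + #b.primeFactors := by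
  rw [hab.primeFactors_mul, card_union_of_disjoint hab.disjoint_primeFactors]

lemma card_primeFactors_add_card_primeFactors_div {n d : ℕ} (hn : Squarefree n) (hd : d ∣ n) :
    #d.primeFactors + #(n / d).primeFactors = #n.primeFactors := by
  have hn' : d * (n / d) = n := Nat.mul_div_cancel' hd
  rw [← Coprime.card_primeFactors_mul (coprime_of_squarefree_mul (by rwa [hn'])), hn']

lemma card_divisors_of_squarefree {n : ℕ} (hn : Squarefree n) :
    #n.divisors = 2 ^ #n.primeFactors := by
  rw [card_divisors hn.ne_zero, ← prod_const]
  refine prod_congr rfl fun p hp => ?_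
  have h1 : n.factorization p ≤ 1 := hn.natFactorization_le_one p
  have h2 : n.factorization p ≠ 0 := Finsupp.mem_support_iff.mp (by simpa using hp)
  omega

lemma filter_dvd_divisors_mul {a b : ℕ} (hb : b ≠ 0) :
    (a * b).divisors.filter (b ∣ ·) = a.divisors.map ⟨(· * b), mul_left_injective₀ hb⟩ := by
  ext d
  simp only [mem_filter, mem_divisors, mem_map, Function.Embedding.coeFn_mk]
  constructor
  · rintro ⟨⟨hd, hab⟩, e, rfl⟩
    refine ⟨e, ⟨?_, left_ne_zero_of_mul hab⟩, mul_comm e b⟩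
    exact (Nat.mul_dvd_mul_iff_right (Nat.pos_of_ne_zero hb)).mp (by rwa [mul_comm b e] at hd)
  · rintro ⟨e, ⟨he, ha⟩, rfl⟩
    exact ⟨⟨mul_dvd_mul_right he b, mul_ne_zero ha hb⟩, dvd_mul_left b e⟩

lemma card_filter_dvd_ne_divisors_mul {a b : ℕ} (ha : a ≠ 0) (hb : b ≠ 0) :
    #((a * b).divisors.filter fun d => b ∣ d ∧ d ≠ a * b) = #a.divisors - 1 := by
  rw [← filter_filter, filter_ne', filter_dvd_divisors_mul hb, card_erase_of_mem, card_map]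
  exact mem_map.mpr ⟨a, mem_divisors_self a ha, rfl⟩

end Nat

theorem ord2_sum_eq_r_sub_one_general
    (mp mm : ℕ) (hp : Squarefree mp) (hm : Squarefree mm) (hco : mp.Coprime mm)
    (h1 : 1 < mp)
    (v u : ℕ → ℚ)
    (hv : ∀ d ∈ (mp * mm).divisors, mm ∣ d → d ≠ mp * mm →
      ord2 (v d) = ((d.primeFactors.card : ℤ) - 1 : ℤ))
    (hu : ∀ d, ord2 (u d) = (0 : ℤ)) :
    ((mp * mm).divisors.filter (fun d => mm ∣ d ∧ d ≠ mp * mm)).card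
        = 2 ^ mp.primeFactors.card - 1 ∧
    Odd (2 ^ mp.primeFactors.card - 1) ∧
    ord2 (∑ d ∈ (mp * mm).divisors.filter (fun d => mm ∣ d ∧ d ≠ mp * mm),
        (2 : ℚ) ^ ((mp * mm) / d).primeFactors.card * v d * u d)
      = ((((mp * mm).primeFactors.card : ℤ) - 1 : ℤ) : WithTop ℤ) := by
  have hcount : #((mp * mm).divisors.filter fun d => mm ∣ d ∧ d ≠ mp * mm)
      = 2 ^ #mp.primeFactors - 1 := by
    rw [Nat.card_filter_dvd_ne_divisors_mul hp.ne_zero hm.ne_zero,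
      Nat.card_divisors_of_squarefree hp]
  have hodd : Odd (2 ^ #mp.primeFactors - 1) :=
    Nat.Even.sub_odd Nat.one_le_two_pow
      ((Nat.even_pow' (card_pos.mpr (Nat.nonempty_primeFactors.mpr h1)).ne').mpr even_two) odd_one
  refine ⟨hcount, hodd, (ord2_sum_of_forall_eq _ _ fun d hd => ?_).1 (hcount ▸ hodd)⟩
  obtain ⟨hdm, hmmd, hdne⟩ := mem_filter.mp hd
  have hcards := Nat.card_primeFactors_add_card_primeFactors_div
    ((Nat.squarefree_mul hco).mpr ⟨hp, hm⟩) (Nat.dvd_of_mem_divisors hdm)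
  rw [ord2_mul, ord2_mul, ord2_two_pow, hv d hdm hmmd hdne, hu d,
    ← WithTop.coe_add, ← WithTop.coe_add, WithTop.coe_eq_coe]
  omega

/-- Combinatorial core of Theorem 5.2.  Let `m = m⁺ * m⁻` be a product of `r` distinct odd
primes, the primes dividing `m⁺` being `1 mod 4` and those dividing `m⁻` being `3 mod 4`,
with `r(m⁺) ≥ 1` and `r(m⁻) ≥ 1`.  Given rationals `v d` indexed by divisors of `m` with
`ord₂(v d) = r(d) - 1` when `m⁻ ∣ d` and `d ≠ m`, `ord₂(v d) > r(d) - 1` when `m⁻ ∤ d` and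
`1 < d < m`, and odd units `u d` (`ord₂(u d) = 0`), the number of divisors `d` of `m` with
`m⁻ ∣ d` and `d ≠ m` equals `2^{r(m⁺)} - 1` (an odd number), and
`ord₂( ∑_{m⁻ ∣ d, d ≠ m} 2^{r(m/d)} · v d · u d ) = r(m) - 1`. -/
theorem ord2_sum_eq_r_sub_one
    (mp mm : ℕ) (hp : Squarefree mp) (hm : Squarefree mm) (hco : mp.Coprime mm)
    (h1 : 1 < mp) (h1' : 1 < mm)
    (hpmod : ∀ p ∈ mp.primeFactors, p % 4 = 1)
    (hmmod : ∀ p ∈ mm.primeFactors, p % 4 = 3)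
    (v u : ℕ → ℚ)
    (hv : ∀ d ∈ (mp * mm).divisors, mm ∣ d → d ≠ mp * mm →
      ord2 (v d) = ((d.primeFactors.card : ℤ) - 1 : ℤ))
    (hv' : ∀ d ∈ (mp * mm).divisors, 1 < d → d ≠ mp * mm → ¬ mm ∣ d →
      (((d.primeFactors.card : ℤ) - 1 : ℤ) : WithTop ℤ) < ord2 (v d))
    (hu : ∀ d, ord2 (u d) = (0 : ℤ)) :
    ((mp * mm).divisors.filter (fun d => mm ∣ d ∧ d ≠ mp * mm)).card
        = 2 ^ mp.primeFactors.card - 1 ∧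
    Odd (2 ^ mp.primeFactors.card - 1) ∧
    ord2 (∑ d ∈ (mp * mm).divisors.filter (fun d => mm ∣ d ∧ d ≠ mp * mm),
        (2 : ℚ) ^ ((mp * mm) / d).primeFactors.card * v d * u d)
      = ((((mp * mm).primeFactors.card : ℤ) - 1 : ℤ) : WithTop ℤ) :=
  ord2_sum_eq_r_sub_one_general mp mm hp hm hco h1 v u hv hu
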